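/- arXiv:1912.10073 — 2 statements merged into one kernel-verified Lean document; each statement's English description precedes it below -/
import Mathlib

section
/- (Pooling equilibrium PBNE₁ on N.) Let α, λ, δ, c be positive reals, f > 0, θ ∈ [0, 1], q ∈ [0, 1], and suppose θ·(δ + λ + α·(1 − 1/f)) ≥ δ + c. Then the profile in which both sender types play N, the defender plays R after N and R̄ after G, with on-path belief p = θ, satisfies all the sequential-rationality conditions: (i) θ·(λ − α/f − c) + (1 − θ)·(−δ − c) ≥ θ·(−α) (R is optimal at N under belief θ); (ii) 0 ≥ q·(−c) + (1 − q)·(−δ − c) (R̄ is optimal at G under any belief q); (iii) α/f − β ≥ −β (the bot cannot gain by deviating from N to G); (iv) the legitimate user's payoff 0 from N is at least its payoff 0 from G. -/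
theorem rrm_optimal_at_N_iff (α lam δ c f θ : ℝ) :
    θ * (lam - α / f - c) + (1 - θ) * (-δ - c) ≥ θ * (-α) ↔
      θ * (δ + lam + α * (1 - 1 / f)) ≥ δ + c := by
  have gain_eq : θ * (lam - α / f - c) + (1 - θ) * (-δ - c) - θ * (-α)
      = θ * (δ + lam + α * (1 - 1 / f)) - (δ + c) := by ring
  rw [ge_iff_le, ge_iff_le, ← sub_nonneg, gain_eq, sub_nonneg]

theorem no_rrm_optimal_at_G {δ c q : ℝ} (hδ : 0 ≤ δ) (hc : 0 ≤ c) (hq : q ≤ 1) :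
    q * (-c) + (1 - q) * (-δ - c) ≤ 0 := by
  linarith [mul_nonneg (sub_nonneg.2 hq) hδ]

theorem pooling_PBNE1_on_N_general
    (α lam δ c β f θ q : ℝ)
    (hα : α > 0) (hδ : δ > 0) (hc : c > 0)
    (hf : f > 0) (hq : q ∈ Set.Icc (0 : ℝ) 1)
    (hcond : θ * (δ + lam + α * (1 - 1 / f)) ≥ δ + c) :
    θ * (lam - α / f - c) + (1 - θ) * (-δ - c) ≥ θ * (-α) ∧
    (0 : ℝ) ≥ q * (-c) + (1 - q) * (-δ - c) ∧
    α / f - β ≥ -β ∧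
    (0 : ℝ) ≥ (0 : ℝ) :=
  ⟨(rrm_optimal_at_N_iff α lam δ c f θ).2 hcond, no_rrm_optimal_at_G hδ.le hc.le hq.2,
    by linarith [div_pos hα hf], le_rfl⟩

/-- Pooling equilibrium `PBNE₁` on `N`: if `θ·(δ + λ + α(1 − 1/f)) ≥ δ + c`, the profile
`((N,N), (R, R̄))` with on-path belief `p = θ` satisfies all sequential-rationality
conditions. -/
theorem pooling_PBNE1_on_N
    (α lam δ c β f θ q : ℝ)
    (hα : α > 0) (hlam : lam > 0) (hδ : δ > 0) (hc : c > 0)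
    (hf : f > 0) (hθ : θ ∈ Set.Icc (0 : ℝ) 1) (hq : q ∈ Set.Icc (0 : ℝ) 1)
    (hcond : θ * (δ + lam + α * (1 - 1 / f)) ≥ δ + c) :
    θ * (lam - α / f - c) + (1 - θ) * (-δ - c) ≥ θ * (-α) ∧
    (0 : ℝ) ≥ q * (-c) + (1 - q) * (-δ - c) ∧
    α / f - β ≥ -β ∧
    (0 : ℝ) ≥ (0 : ℝ) :=
  pooling_PBNE1_on_N_general α lam δ c β f θ q hα hδ hc hf hq hcond
end

section
/- (Pooling equilibrium PBNE₂ on N.) Let α, λ, δ, c be positive reals, f > 0, θ ∈ [0, 1], q ∈ [0, 1], and suppose θ·(δ + λ + α·(1 − 1/f)) ≤ δ + c. Then the profile in which both sender types play N and the defender plays R̄ after both N and G, with on-path belief p = θ, satisfies all the sequential-rationality conditions: (i) θ·(−α) ≥ θ·(λ − α/f − c) + (1 − θ)·(−δ − c) (R̄ is optimal at N under belief θ); (ii) 0 ≥ q·(−c) + (1 − q)·(−δ − c) (R̄ is optimal at G under any belief q); (iii) α − β ≥ −β (the bot cannot gain by deviating from N to G); (iv) the legitimate user's payoff 0 from N is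 at least its payoff 0 from G. -/
theorem noRRM_optimal_at_N_iff (α lam δ c f θ : ℝ) :
    θ * (-α) ≥ θ * (lam - α / f - c) + (1 - θ) * (-δ - c) ↔
      θ * (δ + lam + α * (1 - 1 / f)) ≤ δ + c := by
  have slack : θ * (-α) - (θ * (lam - α / f - c) + (1 - θ) * (-δ - c)) =
      δ + c - θ * (δ + lam + α * (1 - 1 / f)) := by
    ring
  constructor <;> intro h <;> linarith

theorem noRRM_optimal_at_G {q δ c : ℝ} (hq : q ≤ 1) (hδ : 0 ≤ δ) (hc : 0 ≤ c) :
    (0 : ℝ) ≥ q * (-c) + (1 - q) * (-δ - c) := by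
  linarith [mul_nonneg (sub_nonneg.2 hq) hδ]

theorem pooling_PBNE2_on_N_general
    (α lam δ c β f θ q : ℝ)
    (hα : α > 0) (hδ : δ > 0) (hc : c > 0)
    (hq : q ∈ Set.Icc (0 : ℝ) 1)
    (hcond : θ * (δ + lam + α * (1 - 1 / f)) ≤ δ + c) :
    θ * (-α) ≥ θ * (lam - α / f - c) + (1 - θ) * (-δ - c) ∧
    (0 : ℝ) ≥ q * (-c) + (1 - q) * (-δ - c) ∧
    α - β ≥ -β ∧
    (0 : ℝ) ≥ (0 : ℝ) :=
  ⟨(noRRM_optimal_at_N_iff α lam δ c f θ).2 hcond, noRRM_optimal_at_G hq.2 hδ.le hc.le,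
    by linarith, le_rfl⟩

/-- Pooling equilibrium `PBNE₂` on `N`: if `θ·(δ + λ + α(1 − 1/f)) ≤ δ + c`, the profile
`((N,N), (R̄, R̄))` with on-path belief `p = θ` satisfies all sequential-rationality
conditions. -/
theorem pooling_PBNE2_on_N
    (α lam δ c β f θ q : ℝ)
    (hα : α > 0) (hlam : lam > 0) (hδ : δ > 0) (hc : c > 0)
    (hf : f > 0) (hθ : θ ∈ Set.Icc (0 : ℝ) 1) (hq : q ∈ Set.Icc (0 : ℝ) 1)
    (hcond : θ * (δ + lam + α * (1 - 1 / f)) ≤ δ + c) :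
    θ * (-α) ≥ θ * (lam - α / f - c) + (1 - θ) * (-δ - c) ∧
    (0 : ℝ) ≥ q * (-c) + (1 - q) * (-δ - c) ∧
    α - β ≥ -β ∧
    (0 : ℝ) ≥ (0 : ℝ) :=
  pooling_PBNE2_on_N_general α lam δ c β f θ q hα hδ hc hq hcond
end
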